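/- Let (Ω, 𝒜, μ) be a probability space, T : Ω → Ω an invertible, ergodic, μ-preserving transformation, and c : Ω → ℝ a measurable function with c > 0 μ-a.e.; set c̄ = c + c∘T^{−1}. Assume that ∫_Ω c dμ = +∞ or ∫_Ω (1/c) dμ = +∞ (or both). For ω ∈ Ω define f_ω : ℤ → ℝ by f_ω(0) = 0, f_ω(m) = ∑_{ℓ=0}^{m−1} (1/c(T^ℓω)) ∑_{k=1}^{ℓ} c̄(T^kω) for m ≥ 1, and f_ω(m) = ∑_{ℓ=1}^{−m} (1/c(T^{−ℓ}ω)) ∑_{k=0}^{ℓ−1} c̄(T^{−k}ω) for m ≤ −1. Then for μ-almost every ω, f_ω(m)/m² tends to +∞ as m → +∞ and as m → −∞. -/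

import Mathlib

/-!
With `a_ℓ = 1 / c(T^ℓ ω)` and `B_ℓ` the inner sums, `f_ω(m) = ∑_{ℓ<m} a_ℓ B_ℓ` where `B` is
nondecreasing and `B_ℓ ≥ S_ℓ(c)(ω) = ∑_{k<ℓ} c(T^k ω)`. Keeping only `ℓ ∈ [m/2, m)` gives
`f_ω(m) ≥ S_{m/2}(c) · (S_m(1/c) - S_{m/2}(1/c))`, a product of Birkhoff sums over the two halves
of `[0, m)`. Applying the pointwise ergodic theorem to the truncations `min c K` and `min (1/c) K`,
each half is eventually at least `r m / 2` for every `r` below the (possibly infinite) integral of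
`c`, resp. `1/c`. Both integrals are positive and one of them is infinite, so the product eventually
exceeds `R m²` for every `R`. For `m → -∞` the same argument runs along the orbit of `T⁻¹`.

The pointwise ergodic theorem is derived from Garsia's maximal inequality: for `β > ∫ g` the set
where `S_n(g) - β n` is bounded above is exactly `T`-invariant, hence null or conull, and the
maximal inequality applied to `g - β` rules out that it is null.
-/

open Finset Filter MeasureTheory Topology

section BirkhoffMax

variable {α : Type*} (f : α → α) (g : α → ℝ)

noncomputable def birkhoffMax (N : ℕ) (x : α) : ℝ :=
  (range (N + 1)).sup' nonempty_range_add_one fun n => birkhoffSum f g n x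

variable {f g}

lemma birkhoffSum_le_birkhoffMax {n N : ℕ} (h : n ≤ N) (x : α) :
    birkhoffSum f g n x ≤ birkhoffMax f g N x :=
  le_sup' (fun n => birkhoffSum f g n x) (mem_range.2 (Nat.lt_succ_of_le h))

lemma birkhoffMax_nonneg (N : ℕ) (x : α) : 0 ≤ birkhoffMax f g N x := by
  simpa using birkhoffSum_le_birkhoffMax (f := f) (g := g) N.zero_le x

lemma birkhoffMax_mono (x : α) : Monotone fun N => birkhoffMax f g N x := fun _ _ h =>
  sup'_le _ _ fun _ hn =>
    birkhoffSum_le_birkhoffMax ((Nat.lt_succ_iff.1 (mem_range.1 hn)).trans h) x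

lemma birkhoffMax_le_max_zero_add (N : ℕ) (x : α) :
    birkhoffMax f g N x ≤ max 0 (g x + birkhoffMax f g N (f x)) := by
  refine sup'_le _ _ fun n hn => ?_
  cases n with
  | zero => simp
  | succ n =>
    rw [birkhoffSum_succ']
    exact le_max_of_le_right <| (add_le_add_iff_left _).2
      (birkhoffSum_le_birkhoffMax (by simp only [mem_range] at hn; omega) _)

lemma birkhoffMax_le_birkhoffSum_abs (N : ℕ) (x : α) :
    birkhoffMax f g N x ≤ birkhoffSum f (fun y => |g y|) N x := by
  refine sup'_le _ _ fun n hn => ?_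
  calc birkhoffSum f g n x ≤ birkhoffSum f (fun y => |g y|) n x :=
        sum_le_sum fun k _ => le_abs_self _
    _ ≤ birkhoffSum f (fun y => |g y|) N x :=
        sum_le_sum_of_subset_of_nonneg (range_subset_range.2 (Nat.lt_succ_iff.1 (mem_range.1 hn)))
          fun _ _ _ => abs_nonneg _

lemma birkhoffSum_mono {g' : α → ℝ} (h : g ≤ g') (n : ℕ) (x : α) :
    birkhoffSum f g n x ≤ birkhoffSum f g' n x :=
  sum_le_sum fun _ _ => h _

lemma birkhoffSum_sub_birkhoffSum_mono {g' : α → ℝ} (h : g ≤ g') {m n : ℕ} (hmn : m ≤ n)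
    (x : α) : birkhoffSum f g n x - birkhoffSum f g m x ≤
      birkhoffSum f g' n x - birkhoffSum f g' m x := by
  obtain ⟨k, rfl⟩ := Nat.exists_eq_add_of_le hmn
  simp only [birkhoffSum_add, add_sub_cancel_left]
  exact birkhoffSum_mono h k _

variable [MeasurableSpace α] {μ : Measure α}

lemma measurable_birkhoffSum (hf : Measurable f) (hg : Measurable g) (n : ℕ) :
    Measurable (birkhoffSum f g n) :=
  Finset.measurable_sum _ fun k _ => hg.comp (hf.iterate k)

lemma measurable_birkhoffMax (hf : Measurable f) (hg : Measurable g) (N : ℕ) :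
    Measurable (birkhoffMax f g N) :=
  Finset.measurable_range_sup'' fun n _ => measurable_birkhoffSum hf hg n

lemma MeasureTheory.MeasurePreserving.integrable_birkhoffSum (hf : MeasurePreserving f μ μ)
    (hg : Integrable g μ) (n : ℕ) : Integrable (birkhoffSum f g n) μ :=
  integrable_finsetSum _ fun k _ => (hf.iterate k).integrable_comp_of_integrable hg

lemma MeasureTheory.MeasurePreserving.integrable_birkhoffMax (hf : MeasurePreserving f μ μ)
    (hgm : Measurable g) (hg : Integrable g μ) (N : ℕ) : Integrable (birkhoffMax f g N) μ :=
  (hf.integrable_birkhoffSum hg.abs N).mono'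
    (measurable_birkhoffMax hf.measurable hgm N).aestronglyMeasurable
    (ae_of_all _ fun x => by
      rw [Real.norm_of_nonneg (birkhoffMax_nonneg N x)]
      exact birkhoffMax_le_birkhoffSum_abs N x)

theorem MeasureTheory.MeasurePreserving.setIntegral_birkhoffMax_pos_nonneg
    (hf : MeasurePreserving f μ μ) (hgm : Measurable g) (hg : Integrable g μ) (N : ℕ) :
    0 ≤ ∫ x in {x | 0 < birkhoffMax f g N x}, g x ∂μ := by
  set M := birkhoffMax f g N
  set E := {x | 0 < M x}
  have hE : MeasurableSet E :=
    measurableSet_lt measurable_const (measurable_birkhoffMax hf.measurable hgm N)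
  have hM : Integrable M μ := hf.integrable_birkhoffMax hgm hg N
  have hMf : Integrable (M ∘ f) μ := hf.integrable_comp_of_integrable hM
  -- on `E` the maximum is attained by a nonempty sum, whence `M ≤ g + M ∘ f` there
  have hle : ∀ x ∈ E, M x - M (f x) ≤ g x := fun x hx => by
    rcases le_max_iff.1 (birkhoffMax_le_max_zero_add (f := f) (g := g) N x) with h | h
    · exact absurd hx h.not_gt
    · linarith
  have hME : ∫ x in E, M x ∂μ = ∫ x, M x ∂μ :=
    setIntegral_eq_integral_of_ae_compl_eq_zero (ae_of_all _ fun x hx =>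
      le_antisymm (not_lt.1 hx) (birkhoffMax_nonneg N x))
  have hMfE : ∫ x in E, M (f x) ∂μ ≤ ∫ x, M (f x) ∂μ :=
    setIntegral_le_integral hMf (ae_of_all _ fun x => birkhoffMax_nonneg N (f x))
  have hinv : ∫ x, M (f x) ∂μ = ∫ x, M x ∂μ := by
    conv_rhs => rw [← hf.map_eq]
    exact (integral_map hf.measurable.aemeasurable (hf.map_eq.symm ▸ hM.aestronglyMeasurable)).symm
  calc 0 ≤ ∫ x in E, M x ∂μ - ∫ x in E, M (f x) ∂μ := by linarith
    _ = ∫ x in E, (M x - M (f x)) ∂μ := (integral_sub hM.integrableOn hMf.integrableOn).symm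
    _ ≤ ∫ x in E, g x ∂μ := setIntegral_mono_on (hM.sub hMf).integrableOn hg.integrableOn hE hle

end BirkhoffMax

section PointwiseErgodic

variable {α : Type*} {f : α → α} {g : α → ℝ}

lemma bddAbove_birkhoffSum_sub_mul_comp_iff (β : ℝ) (x : α) :
    BddAbove (Set.range fun n : ℕ => birkhoffSum f g n (f x) - β * n) ↔
      BddAbove (Set.range fun n : ℕ => birkhoffSum f g n x - β * n) := by
  have hsucc : ∀ n : ℕ, birkhoffSum f g (n + 1) x - β * (n + 1 : ℕ) =
      g x - β + (birkhoffSum f g n (f x) - β * n) := fun n => by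
    rw [birkhoffSum_succ']; push_cast; ring
  simp only [bddAbove_def, Set.forall_mem_range]
  constructor
  · rintro ⟨C, hC⟩
    refine ⟨max 0 (g x - β + C), fun n => ?_⟩
    cases n with
    | zero => simp
    | succ n => rw [hsucc]; exact le_max_of_le_right (by linarith [hC n])
  · rintro ⟨C, hC⟩
    exact ⟨C - (g x - β), fun n => by linarith [hC (n + 1), hsucc n]⟩

variable [MeasurableSpace α] {μ : Measure α} [IsProbabilityMeasure μ]

theorem Ergodic.ae_bddAbove_birkhoffSum_sub_mul (hf : Ergodic f μ) (hgm : Measurable g)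
    (hg : Integrable g μ) {β : ℝ} (hβ : ∫ x, g x ∂μ < β) :
    ∀ᵐ x ∂μ, BddAbove (Set.range fun n : ℕ => birkhoffSum f g n x - β * n) := by
  set D := {x | BddAbove (Set.range fun n : ℕ => birkhoffSum f g n x - β * n)}
  have hD : MeasurableSet D := measurableSet_bddAbove_range fun n =>
    (measurable_birkhoffSum hf.measurable hgm n).sub_const _
  have hDinv : f ⁻¹' D = D := Set.ext fun x => bddAbove_birkhoffSum_sub_mul_comp_iff β x
  refine (hf.toPreErgodic.ae_mem_or_ae_notMem hD hDinv).resolve_right fun hnot => ?_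
  set g' : α → ℝ := fun x => g x - β
  have hg' : Integrable g' μ := hg.sub (integrable_const β)
  have hsum : ∀ n x, birkhoffSum f g' n x = birkhoffSum f g n x - β * n := fun n x => by
    simp [g', birkhoffSum, sum_sub_distrib, mul_comm]
  set E : ℕ → Set α := fun N => {x | 0 < birkhoffMax f g' N x}
  have hE : ∀ N, MeasurableSet (E N) := fun N =>
    measurableSet_lt measurable_const (measurable_birkhoffMax hf.measurable (hgm.sub_const β) N)
  -- off `D` some Birkhoff sum of `g'` is positive, so the sets `E N` exhaust `α` up to a null set
  have hcover : ∀ᵐ x ∂μ, x ∈ ⋃ N, E N := hnot.mono fun x hx => by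
    obtain ⟨n, hn⟩ : ∃ n : ℕ, 0 < birkhoffSum f g' n x := by
      by_contra! h
      exact hx ⟨0, Set.forall_mem_range.2 fun n => by linarith [h n, hsum n x]⟩
    exact Set.mem_iUnion.2 ⟨n, hn.trans_le (birkhoffSum_le_birkhoffMax le_rfl x)⟩
  have hlim : 0 ≤ ∫ x in ⋃ N, E N, g' x ∂μ :=
    ge_of_tendsto (tendsto_setIntegral_of_monotone hE
      (fun _ _ h x hx => hx.trans_le (birkhoffMax_mono x h)) hg'.integrableOn)
      (Eventually.of_forall fun N =>
        hf.toMeasurePreserving.setIntegral_birkhoffMax_pos_nonneg (hgm.sub_const β) hg' N)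
  rw [setIntegral_eq_integral_of_ae_compl_eq_zero (hcover.mono fun x hx hx' => absurd hx hx'),
    integral_sub hg (integrable_const β)] at hlim
  simp only [integral_const, probReal_univ, smul_eq_mul, one_mul, sub_nonneg] at hlim
  linarith

lemma eventually_div_lt_of_bddAbove_sub_mul {u : ℕ → ℝ} {β a : ℝ} (hβa : β < a)
    (hu : BddAbove (Set.range fun n : ℕ => u n - β * n)) : ∀ᶠ n : ℕ in atTop, u n / n < a := by
  obtain ⟨C, hC⟩ := hu
  filter_upwards [tendsto_natCast_atTop_atTop.eventually_gt_atTop (max 0 (C / (a - β)))]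
    with n hn
  have hn0 : (0 : ℝ) < n := (le_max_left _ _).trans_lt hn
  have hCn : C < (a - β) * n := (div_lt_iff₀' (sub_pos.2 hβa)).1 ((le_max_right _ _).trans_lt hn)
  rw [div_lt_iff₀ hn0]
  linarith [hC ⟨n, rfl⟩]

theorem Ergodic.ae_tendsto_birkhoffAverage (hf : Ergodic f μ) (hgm : Measurable g)
    (hg : Integrable g μ) :
    ∀ᵐ x ∂μ, Tendsto (fun n => birkhoffAverage ℝ f g n x) atTop (𝓝 (∫ x, g x ∂μ)) := by
  set I := ∫ x, g x ∂μ
  have hbdd : ∀ᵐ x ∂μ, ∀ k : ℕ,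
      BddAbove (Set.range fun n : ℕ => birkhoffSum f g n x - (I + 1 / (k + 1)) * n) ∧
      BddAbove (Set.range fun n : ℕ => birkhoffSum f (-g) n x - (-I + 1 / (k + 1)) * n) :=
    ae_all_iff.2 fun k =>
      (hf.ae_bddAbove_birkhoffSum_sub_mul hgm hg
        (by linarith [Nat.one_div_pos_of_nat (α := ℝ) (n := k)])).and
      (hf.ae_bddAbove_birkhoffSum_sub_mul hgm.neg hg.neg
        (by rw [Pi.neg_def, integral_neg]; linarith [Nat.one_div_pos_of_nat (α := ℝ) (n := k)]))
  filter_upwards [hbdd] with x hx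
  have havg : ∀ n, birkhoffAverage ℝ f g n x = birkhoffSum f g n x / n := fun n => by
    rw [birkhoffAverage, smul_eq_mul, inv_mul_eq_div]
  simp only [havg]
  refine tendsto_order.2 ⟨fun a ha => ?_, fun a ha => ?_⟩
  · obtain ⟨k, hk⟩ := exists_nat_one_div_lt (sub_pos.2 ha)
    filter_upwards [eventually_div_lt_of_bddAbove_sub_mul (a := -a) (by linarith) (hx k).2]
      with n hn
    rw [birkhoffSum_neg, neg_div] at hn
    linarith
  · obtain ⟨k, hk⟩ := exists_nat_one_div_lt (sub_pos.2 ha)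
    exact eventually_div_lt_of_bddAbove_sub_mul (by linarith) (hx k).1

end PointwiseErgodic

section Halves

variable {u : ℕ → ℝ} {I : ℝ}

lemma tendsto_natCast_div_two_div :
    Tendsto (fun n : ℕ => ((n / 2 : ℕ) : ℝ) / n) atTop (𝓝 (1 / 2)) := by
  have h := (tendsto_nat_floor_div_atTop (R := ℝ)).comp
    ((tendsto_natCast_atTop_atTop (R := ℝ)).atTop_div_const (two_pos (α := ℝ)))
  rw [← one_mul (1 / 2 : ℝ)]
  refine (h.mul_const (1 / 2)).congr' ?_
  filter_upwards [eventually_ne_atTop 0] with n hn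
  have hfloor : ⌊(n : ℝ) / 2⌋₊ = n / 2 := by exact_mod_cast Nat.floor_div_eq_div (K := ℝ) n 2
  simp only [Function.comp_apply, hfloor]
  field_simp

lemma Filter.Tendsto.comp_div_two_div (hu : Tendsto (fun n : ℕ => u n / n) atTop (𝓝 I)) :
    Tendsto (fun n : ℕ => u (n / 2) / n) atTop (𝓝 (I / 2)) := by
  rw [div_eq_mul_one_div I]
  refine ((hu.comp (Nat.tendsto_div_const_atTop two_ne_zero)).mul
    tendsto_natCast_div_two_div).congr' ?_
  filter_upwards [eventually_ge_atTop 2] with n hn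
  have : ((n / 2 : ℕ) : ℝ) ≠ 0 := by exact_mod_cast (Nat.div_pos hn two_pos).ne'
  simp only [Function.comp_apply]
  field_simp

lemma Filter.Tendsto.sub_comp_div_two_div (hu : Tendsto (fun n : ℕ => u n / n) atTop (𝓝 I)) :
    Tendsto (fun n : ℕ => (u n - u (n / 2)) / n) atTop (𝓝 (I / 2)) := by
  simpa [sub_div, sub_half] using hu.sub hu.comp_div_two_div

end Halves

section Truncation

variable {α : Type*} [MeasurableSpace α] {μ : Measure α} [IsProbabilityMeasure μ]
  {f : α → α} {g : α → ℝ}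

lemma integrable_min_natCast (hgm : Measurable g) (hg0 : 0 ≤ᵐ[μ] g) (K : ℕ) :
    Integrable (fun x => min (g x) K) μ :=
  (integrable_const (K : ℝ)).mono' (hgm.min measurable_const).aestronglyMeasurable
    (hg0.mono fun x hx => by
      rw [Real.norm_of_nonneg (le_min hx K.cast_nonneg)]
      exact min_le_right _ _)

lemma exists_lt_integral_min_of_ofReal_lt_lintegral (hgm : Measurable g) (hg0 : 0 ≤ᵐ[μ] g)
    {r : ℝ} (hr : ENNReal.ofReal r < ∫⁻ x, ENNReal.ofReal (g x) ∂μ) :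
    ∃ K : ℕ, r < ∫ x, min (g x) K ∂μ := by
  have hsup : ⨆ K : ℕ, ∫⁻ x, ENNReal.ofReal (min (g x) K) ∂μ = ∫⁻ x, ENNReal.ofReal (g x) ∂μ := by
    rw [← lintegral_iSup (fun K => (hgm.min measurable_const).ennreal_ofReal)
      fun K K' h x => ENNReal.ofReal_le_ofReal (min_le_min_left _ (Nat.cast_le.2 h))]
    refine lintegral_congr fun x => le_antisymm
      (iSup_le fun K => ENNReal.ofReal_le_ofReal (min_le_left _ _)) ?_
    exact le_iSup_of_le ⌈g x⌉₊ (by rw [min_eq_left (Nat.le_ceil _)])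
  rw [← hsup] at hr
  obtain ⟨K, hK⟩ := lt_iSup_iff.1 hr
  rw [← ofReal_integral_eq_lintegral_ofReal (integrable_min_natCast hgm hg0 K)
    (hg0.mono fun x hx => le_min hx K.cast_nonneg)] at hK
  exact ⟨K, ((ENNReal.ofReal_lt_ofReal_iff'.1 hK)).1⟩

theorem Ergodic.ae_eventually_le_birkhoffSum_halves (hf : Ergodic f μ) (hgm : Measurable g)
    (hg0 : 0 ≤ᵐ[μ] g) :
    ∀ᵐ x ∂μ, ∀ r : ℝ, ENNReal.ofReal r < ∫⁻ x, ENNReal.ofReal (g x) ∂μ →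
      ∀ᶠ n : ℕ in atTop, r * n ≤ 2 * birkhoffSum f g (n / 2) x ∧
        r * n ≤ 2 * (birkhoffSum f g n x - birkhoffSum f g (n / 2) x) := by
  -- truncations `min g K` are integrable, so the ergodic theorem applies to them
  have hlim : ∀ᵐ x ∂μ, ∀ K : ℕ, Tendsto (fun n : ℕ => birkhoffSum f (fun y => min (g y) K) n x / n)
      atTop (𝓝 (∫ y, min (g y) K ∂μ)) :=
    ae_all_iff.2 fun K => (hf.ae_tendsto_birkhoffAverage (hgm.min measurable_const)
      (integrable_min_natCast hgm hg0 K)).mono fun x hx => by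
        simpa only [birkhoffAverage, smul_eq_mul, inv_mul_eq_div] using hx
  filter_upwards [hlim] with x hx r hr
  obtain ⟨K, hK⟩ := exists_lt_integral_min_of_ofReal_lt_lintegral hgm hg0 hr
  have hle : (fun y => min (g y) K) ≤ g := fun y => min_le_left _ _
  have hhalf : r / 2 < (∫ y, min (g y) K ∂μ) / 2 := by linarith
  filter_upwards [(hx K).comp_div_two_div.eventually (eventually_gt_nhds hhalf),
    (hx K).sub_comp_div_two_div.eventually (eventually_gt_nhds hhalf),
    eventually_gt_atTop 0] with n h₁ h₂ hn
  have hn' : (0 : ℝ) < n := Nat.cast_pos.2 hn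
  rw [lt_div_iff₀ hn'] at h₁ h₂
  constructor
  · linarith [birkhoffSum_mono hle (f := f) (n / 2) x]
  · linarith [birkhoffSum_sub_birkhoffSum_mono hle (f := f) (Nat.div_le_self n 2) x]

end Truncation

section Growth

lemma ENNReal.exists_ofReal_lt_ofReal_lt_le_mul {x y : ENNReal} (hx : 0 < x) (hy : 0 < y)
    (hxy : x = ⊤ ∨ y = ⊤) (R : ℝ) :
    ∃ r s : ℝ, 0 < r ∧ 0 < s ∧ ENNReal.ofReal r < x ∧ ENNReal.ofReal s < y ∧ R ≤ r * s := by
  wlog hxtop : x = ⊤ generalizing x y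
  · obtain ⟨s, r, hs, hr, hsy, hrx, hR⟩ := this hy hx hxy.symm (hxy.resolve_left hxtop)
    exact ⟨r, s, hr, hs, hrx, hsy, hR.trans (mul_comm s r).le⟩
  obtain ⟨s, -, hs0, hsy⟩ := ENNReal.lt_iff_exists_real_btwn.1 hy
  have hs : 0 < s := ENNReal.ofReal_pos.1 hs0
  refine ⟨max 1 (R / s), s, lt_max_of_lt_left one_pos, hs, hxtop ▸ ENNReal.ofReal_lt_top, hsy, ?_⟩
  calc R = R / s * s := by field_simp
    _ ≤ max 1 (R / s) * s := mul_le_mul_of_nonneg_right (le_max_right _ _) hs.le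

variable {α : Type*} [MeasurableSpace α] {μ : Measure α} [IsProbabilityMeasure μ]
  {f : α → α} {c : α → ℝ}

lemma lintegral_ofReal_pos (hcm : Measurable c) (hc : ∀ᵐ x ∂μ, 0 < c x) :
    0 < ∫⁻ x, ENNReal.ofReal (c x) ∂μ := by
  refine pos_iff_ne_zero.2 fun h => ?_
  rw [lintegral_eq_zero_iff hcm.ennreal_ofReal] at h
  obtain ⟨x, hx0, hx⟩ := (h.and hc).exists
  exact hx.not_ge (ENNReal.ofReal_eq_zero.1 hx0)

theorem Ergodic.ae_tendsto_birkhoffSum_mul_birkhoffSum_inv_div_sq (hf : Ergodic f μ)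
    (hcm : Measurable c) (hc : ∀ᵐ x ∂μ, 0 < c x)
    (hdiv : ∫⁻ x, ENNReal.ofReal (c x) ∂μ = ⊤ ∨ ∫⁻ x, ENNReal.ofReal (c x)⁻¹ ∂μ = ⊤) :
    ∀ᵐ x ∂μ, Tendsto (fun n : ℕ => birkhoffSum f c (n / 2) x *
      (birkhoffSum f (fun y => (c y)⁻¹) n x - birkhoffSum f (fun y => (c y)⁻¹) (n / 2) x) /
        (n : ℝ) ^ 2) atTop atTop := by
  have hc' : ∀ᵐ x ∂μ, 0 < (c x)⁻¹ := hc.mono fun x hx => inv_pos.2 hx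
  filter_upwards [hf.ae_eventually_le_birkhoffSum_halves hcm (hc.mono fun _ => le_of_lt),
    hf.ae_eventually_le_birkhoffSum_halves (g := fun y => (c y)⁻¹) hcm.inv
      (hc'.mono fun _ => le_of_lt)] with x hb ha
  refine tendsto_atTop.2 fun R => ?_
  obtain ⟨r, s, hr, hs, hrc, hsc, hR⟩ := ENNReal.exists_ofReal_lt_ofReal_lt_le_mul
    (lintegral_ofReal_pos hcm hc) (lintegral_ofReal_pos hcm.inv hc') hdiv (4 * R)
  filter_upwards [hb r hrc, ha s hsc, eventually_gt_atTop 0] with n hbn han hn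
  rw [le_div_iff₀ (by positivity)]
  calc R * n ^ 2 ≤ (r * n / 2) * (s * n / 2) := by nlinarith [sq_nonneg (n : ℝ)]
    _ ≤ _ := mul_le_mul (by linarith [hbn.1]) (by linarith [han.2]) (by positivity)
        (by linarith [hbn.1, mul_pos hr (Nat.cast_pos.2 hn : (0 : ℝ) < n)])

end Growth

section OrbitSums

lemma sum_range_mul_sub_le_sum_mul {a b B : ℕ → ℝ} {s : Finset ℕ} {n : ℕ}
    (hs : Ico (n / 2) n ⊆ s) (ha : ∀ ℓ, 0 ≤ a ℓ) (hb : ∀ k, 0 ≤ b k) (hB : Monotone B)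
    (hbB : ∀ ℓ, ∑ k ∈ range ℓ, b k ≤ B ℓ) :
    (∑ k ∈ range (n / 2), b k) * (∑ ℓ ∈ range n, a ℓ - ∑ ℓ ∈ range (n / 2), a ℓ) ≤
      ∑ ℓ ∈ s, a ℓ * B ℓ := by
  rw [← sum_Ico_eq_sub _ (Nat.div_le_self n 2), mul_sum]
  calc ∑ ℓ ∈ Ico (n / 2) n, (∑ k ∈ range (n / 2), b k) * a ℓ
      ≤ ∑ ℓ ∈ Ico (n / 2) n, a ℓ * B ℓ := sum_le_sum fun ℓ hℓ => by
        rw [mul_comm]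
        exact mul_le_mul_of_nonneg_left ((hbB _).trans (hB (mem_Ico.1 hℓ).1)) (ha ℓ)
    _ ≤ ∑ ℓ ∈ s, a ℓ * B ℓ := sum_le_sum_of_subset_of_nonneg hs fun ℓ _ _ =>
        mul_nonneg (ha ℓ) ((sum_nonneg fun k _ => hb k).trans (hbB ℓ))

variable {α : Type*} {τ : α → α} {c cbar : α → ℝ} {x : α}

lemma birkhoffSum_mul_sub_le_sum_range_inv_mul (hc : ∀ k, 0 < c (τ^[k] x))
    (hcbar : ∀ k, c (τ^[k] x) ≤ cbar (τ^[k + 1] x)) (n : ℕ) :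
    birkhoffSum τ c (n / 2) x *
        (birkhoffSum τ (fun y => (c y)⁻¹) n x - birkhoffSum τ (fun y => (c y)⁻¹) (n / 2) x) ≤
      ∑ ℓ ∈ range n, (c (τ^[ℓ] x))⁻¹ * ∑ k ∈ Icc 1 ℓ, cbar (τ^[k] x) := by
  refine sum_range_mul_sub_le_sum_mul (fun ℓ hℓ => mem_range.2 (mem_Ico.1 hℓ).2)
    (fun ℓ => inv_nonneg.2 (hc ℓ).le) (fun k => (hc k).le) ?_ fun ℓ => ?_
  · refine fun ℓ ℓ' h => sum_le_sum_of_subset_of_nonneg (Icc_subset_Icc_right h) fun k hk _ => ?_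
    obtain ⟨j, rfl⟩ := Nat.exists_eq_add_of_le' (mem_Icc.1 hk).1
    exact (hc j).le.trans (hcbar j)
  · have hshift := sum_Ico_add' (fun k => cbar (τ^[k] x)) 0 ℓ 1
    rw [zero_add, Ico_add_one_right_eq_Icc, ← range_eq_Ico] at hshift
    rw [← hshift]
    exact sum_le_sum fun k _ => hcbar k

lemma birkhoffSum_mul_sub_le_sum_Icc_inv_mul (hc : ∀ k, 0 < c (τ^[k] x))
    (hcbar : ∀ k, c (τ^[k] x) ≤ cbar (τ^[k] x)) {n : ℕ} (hn : 2 ≤ n) :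
    birkhoffSum τ c (n / 2) x *
        (birkhoffSum τ (fun y => (c y)⁻¹) n x - birkhoffSum τ (fun y => (c y)⁻¹) (n / 2) x) ≤
      ∑ ℓ ∈ Icc 1 n, (c (τ^[ℓ] x))⁻¹ * ∑ k ∈ range ℓ, cbar (τ^[k] x) :=
  sum_range_mul_sub_le_sum_mul (fun ℓ hℓ => mem_Icc.2 ⟨by grind, (mem_Ico.1 hℓ).2.le⟩)
    (fun ℓ => inv_nonneg.2 (hc ℓ).le) (fun k => (hc k).le)
    (fun ℓ ℓ' h => sum_le_sum_of_subset_of_nonneg (range_subset_range.2 h) fun k _ _ =>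
      (hc k).le.trans (hcbar k))
    fun ℓ => sum_le_sum fun k _ => hcbar k

end OrbitSums

lemma Int.tendsto_div_sq_atTop_of_le {F : ℤ → ℝ} {G : ℕ → ℝ}
    (hG : Tendsto (fun n : ℕ => G n / (n : ℝ) ^ 2) atTop atTop)
    (h : ∀ m : ℤ, 2 ≤ m → G m.toNat ≤ F m) :
    Tendsto (fun m : ℤ => F m / (m : ℝ) ^ 2) atTop atTop := by
  have htoNat : Tendsto Int.toNat atTop atTop :=
    tendsto_atTop_atTop.2 fun b => ⟨b, fun m hm => by omega⟩
  refine tendsto_atTop_mono' _ ?_ (hG.comp htoNat)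
  filter_upwards [eventually_ge_atTop 2] with m hm
  have hm' : ((m.toNat : ℕ) : ℝ) = m := by exact_mod_cast Int.toNat_of_nonneg (by omega)
  rw [Function.comp_apply, hm']
  exact div_le_div_of_nonneg_right (h m hm) (sq_nonneg _)

lemma Int.tendsto_div_sq_atBot_of_le {F : ℤ → ℝ} {G : ℕ → ℝ}
    (hG : Tendsto (fun n : ℕ => G n / (n : ℝ) ^ 2) atTop atTop)
    (h : ∀ m : ℤ, m ≤ -2 → G (-m).toNat ≤ F m) :
    Tendsto (fun m : ℤ => F m / (m : ℝ) ^ 2) atBot atTop := by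
  have htoNat : Tendsto (fun m : ℤ => (-m).toNat) atBot atTop :=
    tendsto_atBot_atTop.2 fun b => ⟨-b, fun m hm => by omega⟩
  refine tendsto_atTop_mono' _ ?_ (hG.comp htoNat)
  filter_upwards [eventually_le_atBot (-2)] with m hm
  have hm' : (((-m).toNat : ℕ) : ℝ) = -m := by exact_mod_cast Int.toNat_of_nonneg (by omega)
  rw [Function.comp_apply, hm', neg_sq]
  exact div_le_div_of_nonneg_right (h m hm) (sq_nonneg _)

theorem stmt_3_general {Ω : Type*} [MeasurableSpace Ω] (μ : Measure Ω) [IsProbabilityMeasure μ]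
    (T : Ω ≃ᵐ Ω) (hT : Ergodic T μ)
    (c : Ω → ℝ) (hcmeas : Measurable c) (hc : ∀ᵐ ω ∂μ, 0 < c ω)
    (cbar : Ω → ℝ) (hcbar : ∀ ω, cbar ω = c ω + c (T.symm ω))
    (hdiv : (∫⁻ ω, ENNReal.ofReal (c ω) ∂μ) = ⊤ ∨
            (∫⁻ ω, ENNReal.ofReal (c ω)⁻¹ ∂μ) = ⊤)
    (f : Ω → ℤ → ℝ)
    (hfpos : ∀ ω, ∀ m : ℤ, 1 ≤ m →
      f ω m = ∑ ℓ ∈ Finset.range m.toNat,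
        (c (T^[ℓ] ω))⁻¹ * ∑ k ∈ Finset.Icc 1 ℓ, cbar (T^[k] ω))
    (hfneg : ∀ ω, ∀ m : ℤ, m ≤ -1 →
      f ω m = ∑ ℓ ∈ Finset.Icc 1 (-m).toNat,
        (c (T.symm^[ℓ] ω))⁻¹ * ∑ k ∈ Finset.range ℓ, cbar (T.symm^[k] ω)) :
    ∀ᵐ ω ∂μ,
      Tendsto (fun m : ℤ => f ω m / (m : ℝ) ^ 2) atTop atTop ∧
      Tendsto (fun m : ℤ => f ω m / (m : ℝ) ^ 2) atBot atTop := by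
  have horbit : ∀ᵐ ω ∂μ, ∀ k, 0 < c (T^[k] ω) ∧ 0 < c (T.symm^[k] ω) := ae_all_iff.2 fun k =>
    ((hT.toMeasurePreserving.iterate k).quasiMeasurePreserving.ae hc).and
      ((hT.symm.toMeasurePreserving.iterate k).quasiMeasurePreserving.ae hc)
  filter_upwards [hT.ae_tendsto_birkhoffSum_mul_birkhoffSum_inv_div_sq hcmeas hc hdiv,
    hT.symm.ae_tendsto_birkhoffSum_mul_birkhoffSum_inv_div_sq hcmeas hc hdiv, horbit]
    with ω hfwd hbwd hω
  have hfwd_cbar : ∀ k, c (T^[k] ω) ≤ cbar (T^[k + 1] ω) := fun k => by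
    have := (hω (k + 1)).1
    rw [Function.iterate_succ_apply'] at this
    rw [hcbar, Function.iterate_succ_apply', T.symm_apply_apply]
    linarith
  have hbwd_cbar : ∀ k, c (T.symm^[k] ω) ≤ cbar (T.symm^[k] ω) := fun k => by
    rw [hcbar, ← Function.iterate_succ_apply' T.symm]
    linarith [hω (k + 1)]
  refine ⟨Int.tendsto_div_sq_atTop_of_le hfwd fun m hm => ?_,
    Int.tendsto_div_sq_atBot_of_le hbwd fun m hm => ?_⟩
  · rw [hfpos ω m (by omega)]
    exact birkhoffSum_mul_sub_le_sum_range_inv_mul (fun k => (hω k).1) hfwd_cbar _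
  · rw [hfneg ω m (by omega)]
    exact birkhoffSum_mul_sub_le_sum_Icc_inv_mul (fun k => (hω k).2) hbwd_cbar (by omega)

theorem stmt_3 {Ω : Type*} [MeasurableSpace Ω] (μ : Measure Ω) [IsProbabilityMeasure μ]
    (T : Ω ≃ᵐ Ω) (hT : Ergodic T μ)
    (c : Ω → ℝ) (hcmeas : Measurable c) (hc : ∀ᵐ ω ∂μ, 0 < c ω)
    (cbar : Ω → ℝ) (hcbar : ∀ ω, cbar ω = c ω + c (T.symm ω))
    (hdiv : (∫⁻ ω, ENNReal.ofReal (c ω) ∂μ) = ⊤ ∨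
            (∫⁻ ω, ENNReal.ofReal (c ω)⁻¹ ∂μ) = ⊤)
    (f : Ω → ℤ → ℝ)
    (hf0 : ∀ ω, f ω 0 = 0)
    (hfpos : ∀ ω, ∀ m : ℤ, 1 ≤ m →
      f ω m = ∑ ℓ ∈ Finset.range m.toNat,
        (c (T^[ℓ] ω))⁻¹ * ∑ k ∈ Finset.Icc 1 ℓ, cbar (T^[k] ω))
    (hfneg : ∀ ω, ∀ m : ℤ, m ≤ -1 →
      f ω m = ∑ ℓ ∈ Finset.Icc 1 (-m).toNat,
        (c (T.symm^[ℓ] ω))⁻¹ * ∑ k ∈ Finset.range ℓ, cbar (T.symm^[k] ω)) :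
    ∀ᵐ ω ∂μ,
      Tendsto (fun m : ℤ => f ω m / (m : ℝ) ^ 2) atTop atTop ∧
      Tendsto (fun m : ℤ => f ω m / (m : ℝ) ^ 2) atBot atTop :=
  stmt_3_general μ T hT c hcmeas hc cbar hcbar hdiv f hfpos hfneg
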